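/- arXiv:2403.01072 — 2 statements merged into one kernel-verified Lean document; each statement's English description precedes it below -/
import Mathlib

section
/- Suppose g : U × U → ℝ satisfies: (i) for each fixed u, v ↦ g(u, v) is λ-strongly convex with minimizer A(u) ∈ U; (ii) |g(u, v) − g(u', v)| ≤ K‖u − u'‖ for all u, u', v (Lipschitz in the first argument uniformly in the second). Let u_PS satisfy A(u_PS) = u_PS and let u_PO ∈ argmin_{u∈U} g(u, u). Then ‖u_PS − u_PO‖ ≤ 2K/λ. -/
open Filter Topology

/-- Divide `f x ≤ f (t • y + (1 - t) • x) ≤ t f y + (1 - t) f x - t (1 - t) φ ‖y - x‖` by `t`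
and let `t → 0⁺`. -/
lemma UniformConvexOn.add_le_of_isMinOn {E : Type*} [NormedAddCommGroup E] [NormedSpace ℝ E]
    {s : Set E} {φ : ℝ → ℝ} {f : E → ℝ} (hf : UniformConvexOn s φ f) {x y : E}
    (hx : x ∈ s) (hy : y ∈ s) (hmin : IsMinOn f s x) :
    f x + φ ‖y - x‖ ≤ f y := by
  have hstep : ∀ t : ℝ, 0 < t → t ≤ 1 → (1 - t) * φ ‖y - x‖ ≤ f y - f x := by
    intro t ht0 ht1
    have hmem : t • y + (1 - t) • x ∈ s := hf.1 hy hx ht0.le (by linarith) (by ring)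
    have hconv := hf.2 hy hx ht0.le (sub_nonneg.2 ht1) (add_sub_cancel t 1)
    simp only [smul_eq_mul] at hconv
    have hle : f x ≤ f (t • y + (1 - t) • x) := hmin hmem
    have hscaled : t * ((1 - t) * φ ‖y - x‖) ≤ t * (f y - f x) := by linarith
    exact le_of_mul_le_mul_left hscaled ht0
  have hlim : Tendsto (fun t : ℝ => (1 - t) * φ ‖y - x‖) (𝓝[>] 0) (𝓝 (φ ‖y - x‖)) := by
    have hcont : Continuous (fun t : ℝ => (1 - t) * φ ‖y - x‖) := by fun_prop
    simpa using hcont.continuousWithinAt.tendsto (x := 0) (s := Set.Ioi 0)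
  have hev : ∀ᶠ t in 𝓝[>] (0 : ℝ), (1 - t) * φ ‖y - x‖ ≤ f y - f x := by
    filter_upwards [Ioc_mem_nhdsGT zero_lt_one] with t ht using hstep t ht.1 ht.2
  linarith [le_of_tendsto hlim hev]

lemma le_div_of_mul_sq_le_mul {r c lam : ℝ} (hlam : 0 < lam) (hc : 0 ≤ c)
    (h : lam * r ^ 2 ≤ c * r) : r ≤ c / lam := by
  rcases le_or_gt r 0 with hr | hr
  · exact hr.trans (by positivity)
  · rw [le_div_iff₀ hlam]
    exact le_of_mul_le_mul_right (by nlinarith) hr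

/-- Theorem 4, abstracted: if `v ↦ g u v` is `λ`-strongly convex on `U` with
minimizer `A u ∈ U`, and `g` is `K`-Lipschitz in its first argument uniformly in the second,
then the performatively stable control `u_PS` (fixed point of `A`) and the performatively
optimal control `u_PO` (minimizer of `u ↦ g u u` over `U`) satisfy `‖u_PS − u_PO‖ ≤ 2K/λ`. -/
theorem stable_close_to_optimal
    {d : ℕ} (U : Set (EuclideanSpace ℝ (Fin d)))
    (g : EuclideanSpace ℝ (Fin d) → EuclideanSpace ℝ (Fin d) → ℝ)
    (lam K : ℝ) (hlam : 0 < lam) (hK : 0 ≤ K)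
    (A : EuclideanSpace ℝ (Fin d) → EuclideanSpace ℝ (Fin d))
    (hsc : ∀ u, StrongConvexOn U lam (fun v => g u v))
    (hA : ∀ u, A u ∈ U ∧ IsMinOn (fun v => g u v) U (A u))
    (hlip : ∀ u u' v, |g u v - g u' v| ≤ K * ‖u - u'‖)
    (uPS : EuclideanSpace ℝ (Fin d)) (hPSmem : uPS ∈ U) (hPS : A uPS = uPS)
    (uPO : EuclideanSpace ℝ (Fin d)) (hPOmem : uPO ∈ U)
    (hPO : ∀ v ∈ U, g uPO uPO ≤ g v v) :
    ‖uPS - uPO‖ ≤ 2 * K / lam := by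
  have hminPS : IsMinOn (g uPS) U uPS := by
    simpa only [hPS] using (hA uPS).2
  have hgrowth : g uPS uPS + lam / 2 * ‖uPS - uPO‖ ^ 2 ≤ g uPS uPO := by
    simpa only [norm_sub_rev uPO] using (hsc uPS).add_le_of_isMinOn hPSmem hPOmem hminPS
  have hoptimal : g uPO uPO ≤ g uPS uPS := hPO uPS hPSmem
  have hshift : g uPS uPO - g uPO uPO ≤ K * ‖uPS - uPO‖ :=
    (le_abs_self _).trans (hlip uPS uPO uPO)
  exact le_div_of_mul_sq_le_mul hlam (by positivity) (by linarith)
end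

section
/- Let (X, ‖·‖) be a normed space, A : X → X an α-contraction with α < 1/2 and fixed point u*, and let Â_i : X → X be maps satisfying ‖Â_i(u) − A(u)‖ ≤ α·δ for all u and all i, for some δ > 0. Define u_{i+1} = Â_i(u_i). Then for all i, ‖u_i − u*‖ ≤ max{(2α)^i ‖u_0 − u*‖, δ}. -/
/-! Each inexact step costs at most `α δ` on top of the contraction, so
`e (i+1) ≤ α δ + α e i` for the errors `e i = ‖u i - u*‖`. While `e i ≥ δ` this is at most
`2α e i`, and once `e i ≤ δ` it is at most `2α δ ≤ δ`, so the errors either decay at rate `2α`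
or stay in the `δ`-ball for good. -/

theorem norm_sub_le_of_perturbed_step {X : Type*} [SeminormedAddGroup X] {A B : X → X}
    {α ε : ℝ} {x ustar : X} (hA : ‖A x - A ustar‖ ≤ α * ‖x - ustar‖) (hfix : A ustar = ustar)
    (hB : ‖B x - A x‖ ≤ ε) : ‖B x - ustar‖ ≤ ε + α * ‖x - ustar‖ :=
  calc ‖B x - ustar‖ = ‖B x - A ustar‖ := by rw [hfix]
    _ ≤ ‖B x - A x‖ + ‖A x - A ustar‖ := norm_sub_le_norm_sub_add_norm_sub _ _ _
    _ ≤ ε + α * ‖x - ustar‖ := add_le_add hB hA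

theorem le_max_two_mul_pow_mul_of_le_mul_add {e : ℕ → ℝ} {α δ : ℝ} (hα0 : 0 ≤ α)
    (hα : α ≤ 1 / 2) (hδ : 0 ≤ δ) (he : ∀ i, e (i + 1) ≤ α * δ + α * e i) (i : ℕ) :
    e i ≤ max ((2 * α) ^ i * e 0) δ := by
  induction i with
  | zero => simp
  | succ i ih =>
    rcases le_or_gt (e i) δ with hsmall | hlarge
    · refine le_max_of_le_right ?_
      calc e (i + 1) ≤ α * δ + α * δ := (he i).trans (by gcongr)
        _ ≤ δ := by nlinarith
    · have hdecay : e i ≤ (2 * α) ^ i * e 0 := (le_max_iff.mp ih).resolve_right hlarge.not_ge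
      refine le_max_of_le_left ?_
      calc e (i + 1) ≤ 2 * α * e i := (he i).trans (by nlinarith)
        _ ≤ 2 * α * ((2 * α) ^ i * e 0) := by gcongr
        _ = (2 * α) ^ (i + 1) * e 0 := by ring

theorem perturbed_fixed_point_iteration_general
    {X : Type*} [NormedAddCommGroup X]
    (A : X → X) (α : ℝ) (hα0 : 0 ≤ α) (hα : α < 1 / 2)
    (hA : ∀ x y, ‖A x - A y‖ ≤ α * ‖x - y‖)
    (ustar : X) (hfix : A ustar = ustar)
    (Ahat : ℕ → X → X) (δ : ℝ) (hδ : 0 < δ)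
    (hAhat : ∀ i u, ‖Ahat i u - A u‖ ≤ α * δ)
    (u : ℕ → X) (hiter : ∀ i, u (i + 1) = Ahat i (u i)) :
    ∀ i : ℕ, ‖u i - ustar‖ ≤ max ((2 * α) ^ i * ‖u 0 - ustar‖) δ :=
  le_max_two_mul_pow_mul_of_le_mul_add hα0 hα.le hδ.le fun i =>
    hiter i ▸ norm_sub_le_of_perturbed_step (hA _ _) hfix (hAhat i (u i))

/-- perturbed fixed-point iteration, used in Theorem 5: if `A` is an
`α`-contraction with `α < 1/2` and fixed point `u*`, and each approximate update `Â i`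
deviates from `A` by at most `α·δ`, then the inexact iterates satisfy
`‖u_i − u*‖ ≤ max{(2α)^i ‖u₀ − u*‖, δ}`. -/
theorem perturbed_fixed_point_iteration
    {X : Type*} [NormedAddCommGroup X] [NormedSpace ℝ X]
    (A : X → X) (α : ℝ) (hα0 : 0 ≤ α) (hα : α < 1 / 2)
    (hA : ∀ x y, ‖A x - A y‖ ≤ α * ‖x - y‖)
    (ustar : X) (hfix : A ustar = ustar)
    (Ahat : ℕ → X → X) (δ : ℝ) (hδ : 0 < δ)
    (hAhat : ∀ i u, ‖Ahat i u - A u‖ ≤ α * δ)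
    (u : ℕ → X) (hiter : ∀ i, u (i + 1) = Ahat i (u i)) :
    ∀ i : ℕ, ‖u i - ustar‖ ≤ max ((2 * α) ^ i * ‖u 0 - ustar‖) δ :=
  perturbed_fixed_point_iteration_general A α hα0 hα hA ustar hfix Ahat δ hδ hAhat u hiter
end
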